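/- If n = ∑_{i=1}^r 2^{n_i} with n_1 > n_2 > ... > n_r ≥ 0, and n^{(A)} := 2^{n_{A+1}} + ... + 2^{n_r}, then n·K_n = ∑_{A=1}^{r} (∏_{j=1}^{A-1} w_{2^{n_j}}) · (2^{n_A} K_{2^{n_A}} + n^{(A)} D_{2^{n_A}}), where K_n is the Walsh-Fejér kernel. -/

import Mathlib

open MeasureTheory Finset

noncomputable section

/-- The dyadic group: countable product of `ZMod 2`. -/
abbrev G := ℕ → ZMod 2

instance : MeasurableSpace (ZMod 2) := ⊤

/-- Walsh–Paley function `w n`. -/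
def walsh (n : ℕ) (x : G) : ℝ :=
  ∏ k ∈ Finset.range (n + 1), if n.testBit k then (-1 : ℝ) ^ (x k).val else 1

/-- Walsh–Dirichlet kernel `D n = ∑_{k<n} w k`. -/
def Dker (n : ℕ) (x : G) : ℝ := ∑ k ∈ Finset.range n, walsh k x

/-- Walsh–Fejér kernel `K n = (1/n) ∑_{k=1}^n D k`. -/
def Kker (n : ℕ) (x : G) : ℝ := (1 / (n : ℝ)) * ∑ k ∈ Finset.range n, Dker (k + 1) x

/-- Dyadic cylinder `I_n(y)`: points agreeing with `y` in the first `n` coordinates. -/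
def cyl (n : ℕ) (y : G) : Set G := {x | ∀ j < n, x j = y j}

/-- `I_n = I_n(0)`. -/
def Iset (n : ℕ) : Set G := cyl n 0

/-- The generator `e t`, with a single `1` in coordinate `t`. -/
def e (t : ℕ) : G := fun j => if j = t then 1 else 0

lemma prod_walsh_ext (n a b : ℕ) (hab : a ≤ b) (ha : n < 2 ^ a) (x : G) :
    (∏ k ∈ Finset.range b, if n.testBit k then (-1 : ℝ) ^ (x k).val else 1)
      = ∏ k ∈ Finset.range a, if n.testBit k then (-1 : ℝ) ^ (x k).val else 1 := by
  symm
  apply Finset.prod_subset (Finset.range_subset_range.2 hab)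
  intro k _ hk'
  have hak : a ≤ k := by simpa using hk'
  have : n.testBit k = false :=
    Nat.testBit_eq_false_of_lt (lt_of_lt_of_le ha (Nat.pow_le_pow_right (by norm_num) hak))
  simp [this]

lemma walsh_eq_prod (n m : ℕ) (h : n < 2 ^ m) (x : G) :
    walsh n x = ∏ k ∈ Finset.range m, if n.testBit k then (-1 : ℝ) ^ (x k).val else 1 := by
  have h1 : n < 2 ^ (n + 1) :=
    lt_of_lt_of_le (Nat.lt_two_pow_self (n := n)) (Nat.pow_le_pow_right (by norm_num) n.le_succ)
  unfold walsh
  rw [← prod_walsh_ext n (n + 1) (max (n + 1) m) (le_max_left _ _) h1 x,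
      prod_walsh_ext n m (max (n + 1) m) (le_max_right _ _) h x]

lemma walsh_two_pow (p : ℕ) (x : G) : walsh (2 ^ p) x = (-1 : ℝ) ^ (x p).val := by
  rw [walsh_eq_prod (2 ^ p) (p + 1)
    (Nat.pow_lt_pow_right one_lt_two p.lt_succ_self) x,
    Finset.prod_eq_single p]
  · simp [Nat.testBit_two_pow_self]
  · intro k hk hkp
    simp [Nat.testBit_two_pow_of_ne (Ne.symm hkp)]
  · intro h; exact absurd (Finset.self_mem_range_succ p) h

lemma walsh_two_pow_add (p j : ℕ) (hj : j < 2 ^ p) (x : G) :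
    walsh (2 ^ p + j) x = walsh (2 ^ p) x * walsh j x := by
  have h1 : 2 ^ p + j < 2 ^ (p + 1) := by rw [pow_succ]; omega
  have hjp : j < 2 ^ (p + 1) := by rw [pow_succ]; omega
  rw [walsh_eq_prod _ (p + 1) h1, walsh_eq_prod j (p + 1) hjp, walsh_two_pow,
      Finset.prod_range_succ, Finset.prod_range_succ]
  have hb : (2 ^ p + j).testBit p = true := by
    rw [Nat.testBit_two_pow_add_eq, Nat.testBit_eq_false_of_lt hj]; rfl
  have hjb : j.testBit p = false := Nat.testBit_eq_false_of_lt hj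
  rw [hb, hjb, if_pos rfl, if_neg (by simp)]
  have heq : ∀ k ∈ Finset.range p, ((2 ^ p + j).testBit k) = (j.testBit k) := fun k hk =>
    Nat.testBit_two_pow_add_gt (Finset.mem_range.1 hk) j
  rw [Finset.prod_congr rfl (fun k hk => by rw [heq k hk])]
  ring

lemma Dker_two_pow_add (p j : ℕ) (hj : j ≤ 2 ^ p) (x : G) :
    Dker (2 ^ p + j) x = Dker (2 ^ p) x + walsh (2 ^ p) x * Dker j x := by
  unfold Dker
  rw [Finset.sum_range_add, Finset.mul_sum]
  congr 1
  refine Finset.sum_congr rfl fun k hk => ?_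
  exact walsh_two_pow_add p k (lt_of_lt_of_le (Finset.mem_range.1 hk) hj) x

lemma nKker (m : ℕ) (x : G) :
    (m : ℝ) * Kker m x = ∑ k ∈ Finset.range m, Dker (k + 1) x := by
  unfold Kker
  rcases eq_or_ne m 0 with h | h
  · simp [h]
  · rw [← mul_assoc, mul_one_div, div_self (Nat.cast_ne_zero.2 h), one_mul]

lemma sum_two_pow_lt : ∀ (r : ℕ) (m : ℕ → ℕ) (p : ℕ),
    (∀ i j, i < j → j < r → m j < m i) → (∀ i, i < r → m i < p) →
    ∑ i ∈ Finset.range r, 2 ^ m i < 2 ^ p := by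
  intro r
  induction r with
  | zero => intro m p _ _; simp
  | succ r ih =>
    intro m p hdec hlt
    rw [Finset.sum_range_succ']
    have h1 : ∑ k ∈ Finset.range r, 2 ^ m (k + 1) < 2 ^ m 0 := ih (fun i => m (i + 1)) (m 0)
      (fun i j hij hjr => hdec (i + 1) (j + 1) (by omega) (by omega))
      (fun i hi => hdec 0 (i + 1) (by omega) (by omega))
    have h2 : m 0 + 1 ≤ p := hlt 0 (by omega)
    have h3 : 2 ^ (m 0 + 1) ≤ 2 ^ p := Nat.pow_le_pow_right (by norm_num) h2
    have h4 : 2 ^ (m 0 + 1) = 2 ^ m 0 + 2 ^ m 0 := by rw [pow_succ]; omega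
    omega

/-- the decomposition of `n K_n` along the binary expansion of `n`. -/
theorem nKn_decomposition (r : ℕ) (n : ℕ → ℕ)
    (hdec : ∀ i j, i < j → j < r → n j < n i)
    (N : ℕ) (hN : N = ∑ i ∈ Finset.range r, 2 ^ n i) (x : G) :
    (N : ℝ) * Kker N x =
      ∑ A ∈ Finset.range r,
        (∏ j ∈ Finset.range A, walsh (2 ^ n j) x) *
          ((2 : ℝ) ^ n A * Kker (2 ^ n A) x +
            (∑ i ∈ Finset.Ioo A r, (2 : ℝ) ^ n i) * Dker (2 ^ n A) x) := by
  induction r generalizing n N with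
  | zero => simp at hN; simp [hN, Kker]
  | succ r ih =>
    set p := n 0 with hp
    set M : ℕ := ∑ i ∈ Finset.range r, 2 ^ n (i + 1) with hM
    have hNpm : N = 2 ^ p + M := by
      rw [hN, Finset.sum_range_succ', ← hp, ← hM]; omega
    have hMlt : M < 2 ^ p :=
      sum_two_pow_lt r (fun i => n (i + 1)) p
        (fun i j hij hjr => hdec (i + 1) (j + 1) (by omega) (by omega))
        (fun i hi => hdec 0 (i + 1) (by omega) (by omega))
    -- IH for the tail
    have hIH : (M : ℝ) * Kker M x =
        ∑ A ∈ Finset.range r,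
          (∏ j ∈ Finset.range A, walsh (2 ^ n (j + 1)) x) *
            ((2 : ℝ) ^ n (A + 1) * Kker (2 ^ n (A + 1)) x +
              (∑ i ∈ Finset.Ioo A r, (2 : ℝ) ^ n (i + 1)) * Dker (2 ^ n (A + 1)) x) :=
      ih (fun i => n (i + 1))
        (fun i j hij hjr => hdec (i + 1) (j + 1) (by omega) (by omega)) M rfl
    -- LHS computation
    have hLHS : (N : ℝ) * Kker N x =
        (2 : ℝ) ^ p * Kker (2 ^ p) x + (M : ℝ) * Dker (2 ^ p) x
          + walsh (2 ^ p) x * ((M : ℝ) * Kker M x) := by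
      rw [nKker, hNpm, Finset.sum_range_add]
      have hsplit : ∀ k ∈ Finset.range M,
          Dker (2 ^ p + k + 1) x
            = Dker (2 ^ p) x + walsh (2 ^ p) x * Dker (k + 1) x := by
        intro k hk
        have hk' : k + 1 ≤ 2 ^ p := by
          have := Finset.mem_range.1 hk; omega
        rw [show 2 ^ p + k + 1 = 2 ^ p + (k + 1) by omega]
        exact Dker_two_pow_add p (k + 1) hk' x
      rw [Finset.sum_congr rfl hsplit, Finset.sum_add_distrib, Finset.sum_const,
        ← Finset.mul_sum, ← nKker, ← nKker, Finset.card_range, nsmul_eq_mul]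
      push_cast
      ring
    rw [hLHS, hIH]
    -- RHS: peel off A = 0
    rw [Finset.sum_range_succ']
    have hA0 : (∏ j ∈ Finset.range 0, walsh (2 ^ n j) x) *
        ((2 : ℝ) ^ n 0 * Kker (2 ^ n 0) x +
          (∑ i ∈ Finset.Ioo 0 (r + 1), (2 : ℝ) ^ n i) * Dker (2 ^ n 0) x)
        = (2 : ℝ) ^ p * Kker (2 ^ p) x + (M : ℝ) * Dker (2 ^ p) x := by
      have hsum : ∑ i ∈ Finset.Ioo 0 (r + 1), (2 : ℝ) ^ n i = (M : ℝ) := by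
        rw [show Finset.Ioo 0 (r + 1) = Finset.Ico 1 (r + 1) by rfl,
          Finset.sum_Ico_eq_sum_range]
        simp only [Nat.add_sub_cancel]
        push_cast [hM]
        exact Finset.sum_congr rfl fun i _ => by rw [Nat.add_comm 1 i]
      rw [hsum]; simp [hp]
    rw [hA0]
    -- the shifted terms
    have hterm : ∀ A ∈ Finset.range r,
        (∏ j ∈ Finset.range (A + 1), walsh (2 ^ n j) x) *
          ((2 : ℝ) ^ n (A + 1) * Kker (2 ^ n (A + 1)) x +
            (∑ i ∈ Finset.Ioo (A + 1) (r + 1), (2 : ℝ) ^ n i) * Dker (2 ^ n (A + 1)) x)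
        = walsh (2 ^ p) x *
            ((∏ j ∈ Finset.range A, walsh (2 ^ n (j + 1)) x) *
              ((2 : ℝ) ^ n (A + 1) * Kker (2 ^ n (A + 1)) x +
                (∑ i ∈ Finset.Ioo A r, (2 : ℝ) ^ n (i + 1)) * Dker (2 ^ n (A + 1)) x)) := by
      intro A _
      rw [Finset.prod_range_succ']
      have hIoo : ∑ i ∈ Finset.Ioo (A + 1) (r + 1), (2 : ℝ) ^ n i
          = ∑ i ∈ Finset.Ioo A r, (2 : ℝ) ^ n (i + 1) := by
        rw [← Finset.map_add_right_Ioo A r 1, Finset.sum_map]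
        rfl
      rw [hIoo, hp]
      ring
    rw [Finset.sum_congr rfl hterm, ← Finset.mul_sum]
    ring
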